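/- arXiv:2001.06936 — 2 statements merged into one kernel-verified Lean document; each statement's English description precedes it below -/
import Mathlib

section
/- Let A be a 2n×2n real symmetric matrix, λ ∈ ℝ, e_{λA}(x) = e^{i λ xᵗAx}, and let J be the 2n×2n matrix [[0, I_n], [−I_n, 0]]. Then for every integrable function f on ℝ^{2n} and every x ∈ ℝ^{2n}: (f ×_λ e_{λA})(x) = e_{λA}(x) · 𝔉(e_{λA} f)(λ(2A + J)x), where 𝔉 denotes the Fourier transform 𝔉g(ξ) = ∫_{ℝ^{2n}} g(x) e^{−i x·ξ} dx. -/
open MeasureTheory Matrix Real ENNReal Complex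

noncomputable section

abbrev Hidx (n : ℕ) := Fin n ⊕ Fin n

/-- The `2n × 2n` skew-symmetric matrix `J = [[0, Iₙ], [-Iₙ, 0]]`. -/
def Jmat (n : ℕ) : Matrix (Hidx n) (Hidx n) ℝ := Matrix.fromBlocks 0 1 (-1) 0

/-- The quadratic form `φ(y) = yᵗAy`. -/
def qform {n : ℕ} (A : Matrix (Hidx n) (Hidx n) ℝ) (y : Hidx n → ℝ) : ℝ := y ⬝ᵥ (A *ᵥ y)

/-- The `λ`-twisted convolution
`(f ×_λ g)(x) = ∫ f(x−y) g(y) e^{−iλ xᵗJy} dy`. -/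
def twConv {n : ℕ} (lam : ℝ) (f g : (Hidx n → ℝ) → ℂ) (x : Hidx n → ℝ) : ℂ :=
  ∫ y, f (x - y) * g y * Complex.exp (-(Complex.I * lam * (x ⬝ᵥ (Jmat n *ᵥ y))))

/-- The function `e_{λA}(x) = e^{iλ xᵗAx}`. -/
def eA {n : ℕ} (lam : ℝ) (A : Matrix (Hidx n) (Hidx n) ℝ) (x : Hidx n → ℝ) : ℂ :=
  Complex.exp (Complex.I * lam * qform A x)

/-- The Fourier transform `𝔉g(ξ) = ∫ g(x) e^{−i x·ξ} dx`. -/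
def myFT {n : ℕ} (g : (Hidx n → ℝ) → ℂ) (ξ : Hidx n → ℝ) : ℂ :=
  ∫ x, g x * Complex.exp (-(Complex.I * (x ⬝ᵥ ξ)))

/-- For a `2n × 2n` real symmetric matrix `A`, `λ ∈ ℝ`, every integrable `f` on `ℝ^{2n}`
and every `x`:  `(f ×_λ e_{λA})(x) = e_{λA}(x) · 𝔉(e_{λA} f)(λ(2A+J)x)`. -/
theorem twConv_eA (n : ℕ) (A : Matrix (Hidx n) (Hidx n) ℝ) (hA : A.IsSymm) (lam : ℝ)
    (f : (Hidx n → ℝ) → ℂ) (hf : Integrable f volume) (x : Hidx n → ℝ) :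
    twConv lam f (eA lam A) x =
      eA lam A x * myFT (fun y => eA lam A y * f y) (lam • (((2 : ℝ) • A + Jmat n) *ᵥ x)) := by
  have dot_symm : ∀ u v : Hidx n → ℝ, u ⬝ᵥ (A *ᵥ v) = v ⬝ᵥ (A *ᵥ u) := by
    intro u v
    rw [Matrix.dotProduct_mulVec, ← Matrix.mulVec_transpose, hA.eq, dotProduct_comm]
  have hJT : (Jmat n)ᵀ = -(Jmat n) := by
    simp [Jmat, Matrix.fromBlocks_transpose, Matrix.fromBlocks_neg]
  have dot_J_anti : ∀ u v : Hidx n → ℝ, u ⬝ᵥ (Jmat n *ᵥ v) = -(v ⬝ᵥ (Jmat n *ᵥ u)) := by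
    intro u v
    rw [Matrix.dotProduct_mulVec, ← Matrix.mulVec_transpose, hJT, Matrix.neg_mulVec,
      neg_dotProduct, dotProduct_comm]
  set F : (Hidx n → ℝ) → ℂ := fun y =>
    f (x - y) * eA lam A y * Complex.exp (-(Complex.I * lam * (x ⬝ᵥ (Jmat n *ᵥ y)))) with hF
  have key : ∀ y : Hidx n → ℝ, F (x - y) =
      eA lam A x * ((eA lam A y * f y) *
        Complex.exp (-(Complex.I * (y ⬝ᵥ (lam • (((2 : ℝ) • A + Jmat n) *ᵥ x)))))) := by
    intro y
    have hq : qform A (x - y) = qform A x - 2 * (x ⬝ᵥ (A *ᵥ y)) + qform A y := by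
      simp only [qform, Matrix.mulVec_sub, dotProduct_sub, sub_dotProduct]
      rw [dot_symm y x]; ring
    have hJx : x ⬝ᵥ (Jmat n *ᵥ x) = 0 := by
      have := dot_J_anti x x; linarith
    have hJ : x ⬝ᵥ (Jmat n *ᵥ (x - y)) = -(x ⬝ᵥ (Jmat n *ᵥ y)) := by
      simp only [Matrix.mulVec_sub, dotProduct_sub, hJx]; ring
    have hξ : y ⬝ᵥ (lam • (((2 : ℝ) • A + Jmat n) *ᵥ x)) =
        lam * (2 * (x ⬝ᵥ (A *ᵥ y)) - x ⬝ᵥ (Jmat n *ᵥ y)) := by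
      rw [dotProduct_smul, Matrix.add_mulVec, dotProduct_add,
        Matrix.smul_mulVec, dotProduct_smul, dot_symm y x, dot_J_anti y x]
      simp only [smul_eq_mul]; ring
    simp only [hF, _root_.sub_sub_cancel, eA, hq, hJ, hξ]
    rw [mul_assoc, ← Complex.exp_add,
      show Complex.exp (Complex.I * lam * ((qform A x : ℝ) : ℂ)) *
          (Complex.exp (Complex.I * lam * ((qform A y : ℝ) : ℂ)) * f y *
            Complex.exp (-(Complex.I * ((lam * (2 * (x ⬝ᵥ (A *ᵥ y)) - x ⬝ᵥ (Jmat n *ᵥ y)) : ℝ) : ℂ)))) =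
        f y * Complex.exp (Complex.I * lam * ((qform A x : ℝ) : ℂ) +
          (Complex.I * lam * ((qform A y : ℝ) : ℂ) +
            -(Complex.I * ((lam * (2 * (x ⬝ᵥ (A *ᵥ y)) - x ⬝ᵥ (Jmat n *ᵥ y)) : ℝ) : ℂ)))) from by
        rw [Complex.exp_add, Complex.exp_add]; ring]
    congr 1
    push_cast
    ring
  have hint : twConv lam f (eA lam A) x = ∫ y, F (x - y) := by
    rw [twConv, ← MeasureTheory.integral_sub_left_eq_self F volume x]
  rw [hint, myFT]
  simp only [key]
  rw [MeasureTheory.integral_const_mul]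

end
end

section
/- Let A be a 2n×2n real symmetric matrix, φ(y) = yᵗAy, η a smooth cut-off (η = 1 on |y| ≤ 1, η = 0 on |y| ≥ 2, 0 ≤ η ≤ 1), 0 ≤ γ < 2n, and ν_γ(E) = ∫_{ℝ^{2n}} χ_E(y, φ(y)) η(y) |y|^{−γ} dy. If 1 ≤ p, q ≤ ∞ and the operator T_{ν_γ} f = f ∗ ν_γ is bounded from L^p(ℍⁿ) to L^q(ℍⁿ), then 1/q ≥ 1/p − (2n−γ)/(2n+2). -/
open MeasureTheory Matrix Real ENNReal

noncomputable section

abbrev Hgrp (n : ℕ) := (Hidx n → ℝ) × ℝ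

/-- Heisenberg multiplication `(x,t)·(y,s) = (x+y, t+s+xᵗJy)`. -/
def heisMul {n : ℕ} (p q : Hgrp n) : Hgrp n :=
  (p.1 + q.1, p.2 + q.2 + p.1 ⬝ᵥ (Jmat n *ᵥ q.1))

/-- Heisenberg inversion `(x,t)⁻¹ = (−x,−t)`. -/
def heisInv {n : ℕ} (p : Hgrp n) : Hgrp n := (-p.1, -p.2)

/-- The Euclidean norm on `ℝ^{2n}`. -/
def enorm2n {n : ℕ} (y : Hidx n → ℝ) : ℝ := Real.sqrt (∑ i, y i ^ 2)

/-- Convolution on the right by a Borel measure on the Heisenberg group: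
`(f ∗ μ)(x,t) = ∫ f((x,t)·(y,s)⁻¹) dμ(y,s)`. -/
def heisConv {n : ℕ} (f : Hgrp n → ℝ) (μ : Measure (Hgrp n)) (p : Hgrp n) : ℝ :=
  ∫ q, f (heisMul p (heisInv q)) ∂μ

/-- The measure `ν_γ(E) = ∫_{ℝ^{2n}} χ_E(y, φ(y)) η(y) |y|^{−γ} dy` on `ℍⁿ`. -/
def nuGamma {n : ℕ} (A : Matrix (Hidx n) (Hidx n) ℝ) (η : (Hidx n → ℝ) → ℝ) (γ : ℝ) :
    Measure (Hgrp n) :=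
  Measure.map (fun y => (y, qform A y))
    (volume.withDensity (fun y => ENNReal.ofReal (η y * enorm2n y ^ (-γ))))

/-- exponent absorption -/
lemma pow_absorb {C s r : ℝ} (hC : 0 < C)
    (h : ∀ δ : ℝ, δ ∈ Set.Ioc (0:ℝ) 1 → δ ^ s ≤ C * δ ^ r) : r ≤ s := by
  by_contra h'
  push_neg at h'
  set δ : ℝ := (C + 1) ^ ((s - r)⁻¹) with hδ
  have hC1 : (1:ℝ) ≤ C + 1 := by linarith
  have hδ0 : 0 < δ := Real.rpow_pos_of_pos (by linarith) _
  have hδ1 : δ ≤ 1 :=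
    Real.rpow_le_one_of_one_le_of_nonpos hC1 (by
      apply inv_nonpos.mpr; linarith)
  have hsr : s - r ≠ 0 := by intro hh; apply absurd h'; simp [sub_eq_zero.mp hh]
  have hkey : δ ^ (s - r) = C + 1 := by
    rw [hδ, ← Real.rpow_mul (by linarith : (0:ℝ) ≤ C + 1), inv_mul_cancel₀ hsr, Real.rpow_one]
  have h2 := h δ ⟨hδ0, hδ1⟩
  have h3 : δ ^ s = δ ^ (s - r) * δ ^ r := by
    rw [← Real.rpow_add hδ0]; ring_nf
  have h4 : 0 < δ ^ r := Real.rpow_pos_of_pos hδ0 r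
  rw [h3, hkey] at h2
  nlinarith

lemma abs_le_enorm2n {n : ℕ} (y : Hidx n → ℝ) (i : Hidx n) : |y i| ≤ enorm2n y := by
  rw [← Real.sqrt_sq_eq_abs]
  exact Real.sqrt_le_sqrt (Finset.single_le_sum (fun j _ => sq_nonneg (y j)) (Finset.mem_univ i))

lemma enorm2n_nonneg {n : ℕ} (y : Hidx n → ℝ) : 0 ≤ enorm2n y := Real.sqrt_nonneg _

lemma enorm2n_pos {n : ℕ} {y : Hidx n → ℝ} (h : y ≠ 0) : 0 < enorm2n y := by
  obtain ⟨i, hi⟩ : ∃ i, y i ≠ 0 := by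
    by_contra hc; push_neg at hc; exact h (funext hc)
  have h1 := abs_le_enorm2n y i
  have h2 : 0 < |y i| := abs_pos.mpr hi
  linarith

lemma enorm2n_le {n : ℕ} {y : Hidx n → ℝ} {r : ℝ} (hr : 0 ≤ r) (h : ∀ i, |y i| ≤ r) :
    enorm2n y ≤ (2*n+2)*r := by
  have h1 : ∑ i, y i ^ 2 ≤ ((2*(n:ℝ)+2)*r)^2 := by
    calc ∑ i, y i ^ 2 ≤ ∑ _i : Hidx n, r ^ 2 :=
          Finset.sum_le_sum fun i _ => by
            rw [← sq_abs]; exact pow_le_pow_left₀ (abs_nonneg _) (h i) 2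
    _ = (2*(n:ℝ)) * r^2 := by
          rw [Finset.sum_const, Finset.card_univ, nsmul_eq_mul]
          have hcard : (Fintype.card (Hidx n) : ℝ) = 2*(n:ℝ) := by
            rw [Fintype.card_sum, Fintype.card_fin]
            push_cast
            ring
          rw [hcard]
    _ ≤ ((2*(n:ℝ)+2)*r)^2 := by nlinarith [sq_nonneg r, Nat.cast_nonneg (α := ℝ) n, sq_nonneg ((n:ℝ)*r)]
  exact (Real.sqrt_le_sqrt h1).trans_eq (Real.sqrt_sq (by positivity))

lemma abs_dot_mulVec_le {n : ℕ} (M : Matrix (Hidx n) (Hidx n) ℝ) {x y : Hidx n → ℝ} {r s : ℝ}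
    (hr : 0 ≤ r) (hs : 0 ≤ s) (hx : ∀ i, |x i| ≤ r) (hy : ∀ i, |y i| ≤ s) :
    |x ⬝ᵥ (M *ᵥ y)| ≤ (∑ i, ∑ j, |M i j|) * (r * s) := by
  calc |x ⬝ᵥ (M *ᵥ y)| = |∑ i, x i * ∑ j, M i j * y j| := by
        simp [dotProduct, Matrix.mulVec]
  _ ≤ ∑ i, |x i * ∑ j, M i j * y j| := Finset.abs_sum_le_sum_abs _ _
  _ ≤ ∑ i, ∑ j, |M i j| * (r * s) := by
      refine Finset.sum_le_sum fun i _ => ?_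
      rw [abs_mul]
      calc |x i| * |∑ j, M i j * y j| ≤ r * ∑ j, |M i j| * s := by
            refine mul_le_mul (hx i) ?_ (abs_nonneg _) hr
            refine (Finset.abs_sum_le_sum_abs _ _).trans (Finset.sum_le_sum fun j _ => ?_)
            rw [abs_mul]
            exact mul_le_mul_of_nonneg_left (hy j) (abs_nonneg _)
      _ = ∑ j, |M i j| * (r * s) := by rw [Finset.mul_sum]; exact Finset.sum_congr rfl fun j _ => by ring
  _ = (∑ i, ∑ j, |M i j|) * (r * s) := by rw [Finset.sum_mul]; exact Finset.sum_congr rfl fun i _ => by rw [Finset.sum_mul]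

def boxV (n : ℕ) (r : ℝ) : Set (Hidx n → ℝ) := Set.univ.pi fun _ => Set.Icc (-r) r

lemma boxV_measurable (n : ℕ) (r : ℝ) : MeasurableSet (boxV n r) :=
  MeasurableSet.univ_pi fun _ => measurableSet_Icc

lemma mem_boxV {n : ℕ} {r : ℝ} {y : Hidx n → ℝ} : y ∈ boxV n r ↔ ∀ i, |y i| ≤ r := by
  constructor
  · intro hy i
    have := hy i (Set.mem_univ i)
    rw [Set.mem_Icc] at this
    exact abs_le.mpr this
  · intro hy i _
    exact Set.mem_Icc.mpr (abs_le.mp (hy i))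

lemma volume_boxV (n : ℕ) {r : ℝ} (hr : 0 ≤ r) :
    volume (boxV n r) = ENNReal.ofReal ((2*r)^(2*n)) := by
  rw [boxV, volume_pi_pi]
  simp only [Real.volume_Icc]
  rw [Finset.prod_const, Finset.card_univ]
  have : (ENNReal.ofReal (r - -r)) = ENNReal.ofReal (2*r) := by ring_nf
  rw [this, ← ENNReal.ofReal_pow (by linarith)]
  congr 1
  simp [Fintype.card_sum, two_mul]

lemma continuous_dot_mulVec {n : ℕ} (M : Matrix (Hidx n) (Hidx n) ℝ) (x : Hidx n → ℝ) :
    Continuous fun y : Hidx n → ℝ => x ⬝ᵥ (M *ᵥ y) := by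
  simp only [dotProduct, Matrix.mulVec]
  exact continuous_finset_sum _ fun i _ =>
    continuous_const.mul (continuous_finset_sum _ fun j _ => continuous_const.mul (continuous_apply j))

lemma continuous_qform {n : ℕ} (A : Matrix (Hidx n) (Hidx n) ℝ) : Continuous (qform A) := by
  unfold qform
  simp only [dotProduct, Matrix.mulVec]
  exact continuous_finset_sum _ fun i _ =>
    (continuous_apply i).mul (continuous_finset_sum _ fun j _ => continuous_const.mul (continuous_apply j))

lemma continuous_enorm2n {n : ℕ} : Continuous (enorm2n (n := n)) :=
  Real.continuous_sqrt.comp (continuous_finset_sum _ fun i _ => (continuous_apply i).pow 2)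

lemma nu_finiteness {n : ℕ} (η : (Hidx n → ℝ) → ℝ) (hη : Continuous η)
    (hη01 : ∀ y, η y ∈ Set.Icc (0:ℝ) 1) (hη0 : ∀ y, 2 ≤ enorm2n y → η y = 0)
    {γ : ℝ} (hγ0 : 0 ≤ γ) (hγ : γ < 2*n) :
    (∫⁻ y, ENNReal.ofReal (η y * enorm2n y ^ (-γ))) < ∞ := by
  rcases eq_or_lt_of_le hγ0 with h0 | hγpos
  · -- γ = 0
    have hb : ∀ y, ENNReal.ofReal (η y * enorm2n y ^ (-γ)) ≤
        (boxV n 2).indicator (fun _ => (1:ℝ≥0∞)) y := by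
      intro y
      by_cases hy : y ∈ boxV n 2
      · rw [Set.indicator_of_mem hy]
        rw [← h0, neg_zero, Real.rpow_zero, mul_one]
        exact ENNReal.ofReal_le_one.mpr (hη01 y).2
      · rw [Set.indicator_of_notMem hy]
        obtain ⟨i, hi⟩ : ∃ i, ¬ |y i| ≤ 2 := by
          by_contra hc; push_neg at hc; exact hy (mem_boxV.mpr fun i => hc i)
        push_neg at hi
        have h2 : 2 ≤ enorm2n y := le_trans hi.le (abs_le_enorm2n y i)
        rw [hη0 y h2, zero_mul, ENNReal.ofReal_zero]
    calc (∫⁻ y, ENNReal.ofReal (η y * enorm2n y ^ (-γ)))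
        ≤ ∫⁻ y, (boxV n 2).indicator (fun _ => (1:ℝ≥0∞)) y := lintegral_mono hb
      _ = 1 * volume (boxV n 2) := lintegral_indicator_const (boxV_measurable n 2) 1
      _ < ∞ := by
          rw [one_mul, volume_boxV n (by norm_num : (0:ℝ) ≤ 2)]
          exact ENNReal.ofReal_lt_top
  · -- γ > 0
    set F := fun y : Hidx n → ℝ => η y * enorm2n y ^ (-γ) with hF
    have hFm : Measurable F :=
      hη.measurable.mul (continuous_enorm2n.measurable.pow measurable_const)
    have hFnn : ∀ y, 0 ≤ F y := fun y =>
      mul_nonneg (hη01 y).1 (Real.rpow_nonneg (enorm2n_nonneg y) _)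
    have hFle : ∀ y, F y ≤ enorm2n y ^ (-γ) := fun y =>
      mul_le_of_le_one_left (Real.rpow_nonneg (enorm2n_nonneg y) _) (hη01 y).2
    rw [show (fun y => ENNReal.ofReal (η y * enorm2n y ^ (-γ))) = fun y => ENNReal.ofReal (F y) from rfl,
      lintegral_eq_lintegral_meas_le volume (Filter.Eventually.of_forall hFnn) hFm.aemeasurable]
    have hsub2 : ∀ t : ℝ, 0 < t → {y | t ≤ F y} ⊆ boxV n 2 := by
      intro t ht y hy
      simp only [Set.mem_setOf_eq] at hy
      have hηy : η y ≠ 0 := by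
        intro h
        rw [hF] at hy; simp only [h, zero_mul] at hy; linarith
      have he2 : enorm2n y < 2 := by
        by_contra hc
        push_neg at hc
        exact hηy (hη0 y hc)
      exact mem_boxV.mpr fun i => le_of_lt (lt_of_le_of_lt (abs_le_enorm2n y i) he2)
    have hsubρ : ∀ t : ℝ, 0 < t → {y | t ≤ F y} ⊆ boxV n (t ^ (-γ⁻¹)) := by
      intro t ht y hy
      simp only [Set.mem_setOf_eq] at hy
      have hte : t ≤ enorm2n y ^ (-γ) := le_trans hy (hFle y)
      have hepos : 0 < enorm2n y := by
        rcases lt_or_eq_of_le (enorm2n_nonneg y) with h | h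
        · exact h
        · exfalso
          rw [← h, Real.zero_rpow (neg_ne_zero.mpr (ne_of_gt hγpos))] at hte
          linarith
      have h5 : 0 < enorm2n y ^ γ := Real.rpow_pos_of_pos hepos γ
      have h6 : enorm2n y ^ γ ≤ t⁻¹ := by
        rw [Real.rpow_neg hepos.le] at hte
        have h9 : t * enorm2n y ^ γ ≤ 1 := by
          have := mul_le_mul_of_nonneg_right hte h5.le
          rwa [inv_mul_cancel₀ (ne_of_gt h5)] at this
        rw [← one_div, le_div_iff₀ ht]
        linarith
      have h7 : enorm2n y ≤ t ^ (-γ⁻¹) := by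
        have h8 : enorm2n y ≤ (t⁻¹) ^ γ⁻¹ :=
          (Real.le_rpow_inv_iff_of_pos (enorm2n_nonneg y) (inv_nonneg.mpr ht.le) hγpos).mpr h6
        rwa [Real.inv_rpow ht.le, ← Real.rpow_neg ht.le] at h8
      exact mem_boxV.mpr fun i => le_trans (abs_le_enorm2n y i) h7
    calc ∫⁻ t in Set.Ioi (0:ℝ), volume {y | t ≤ F y}
        ≤ ∫⁻ t in Set.Ioc (0:ℝ) 1 ∪ Set.Ioi 1, volume {y | t ≤ F y} :=
          lintegral_mono_set Set.Ioi_subset_Ioc_union_Ioi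
      _ ≤ (∫⁻ t in Set.Ioc (0:ℝ) 1, volume {y | t ≤ F y}) +
            ∫⁻ t in Set.Ioi (1:ℝ), volume {y | t ≤ F y} := lintegral_union_le _ _ _
      _ < ∞ := by
          refine ENNReal.add_lt_top.2 ⟨?_, ?_⟩
          · calc ∫⁻ t in Set.Ioc (0:ℝ) 1, volume {y | t ≤ F y}
                ≤ ∫⁻ _t in Set.Ioc (0:ℝ) 1, ENNReal.ofReal ((2*2)^(2*n)) := by
                  refine setLIntegral_mono measurable_const fun t ht => ?_
                  rw [← volume_boxV n (by norm_num : (0:ℝ) ≤ 2)]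
                  exact measure_mono (hsub2 t ht.1)
              _ < ∞ := by
                  rw [setLIntegral_const]
                  exact ENNReal.mul_lt_top ENNReal.ofReal_lt_top (by simp [Real.volume_Ioc])
          · have hlt : -(2*(n:ℝ))/γ < -1 := by
              rw [neg_div, neg_lt_neg_iff, lt_div_iff₀ hγpos]
              linarith
            calc ∫⁻ t in Set.Ioi (1:ℝ), volume {y | t ≤ F y}
                ≤ ∫⁻ t in Set.Ioi (1:ℝ), ENNReal.ofReal (2^(2*n) * t ^ (-(2*(n:ℝ))/γ)) := by
                  refine setLIntegral_mono
                    (Measurable.ennreal_ofReal (measurable_const.mul (measurable_id'.pow measurable_const)))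
                    fun t ht => ?_
                  have ht0 : (0:ℝ) < t := lt_trans one_pos ht
                  have hρ0 : (0:ℝ) ≤ t ^ (-γ⁻¹) := Real.rpow_nonneg ht0.le _
                  calc volume {y | t ≤ F y} ≤ volume (boxV n (t ^ (-γ⁻¹))) :=
                        measure_mono (hsubρ t ht0)
                    _ = ENNReal.ofReal ((2 * t ^ (-γ⁻¹))^(2*n)) := volume_boxV n hρ0
                    _ = ENNReal.ofReal (2^(2*n) * t ^ (-(2*(n:ℝ))/γ)) := by
                        congr 1
                        rw [mul_pow, ← Real.rpow_natCast (t ^ (-γ⁻¹)) (2*n), ← Real.rpow_mul ht0.le]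
                        congr 1
                        push_cast
                        ring
                _ < ∞ := IntegrableOn.setLIntegral_lt_top
                    ((integrableOn_Ioi_rpow_of_lt hlt one_pos).const_mul _)

set_option maxHeartbeats 2000000 in
/-- Let `ν_γ` be as above with `0 ≤ γ < 2n`, let `1 ≤ p, q ≤ ∞` (encoded through
`a = 1/p`, `b = 1/q` with `a, b ∈ [0,1]`, the Lebesgue exponents being
`p = (ENNReal.ofReal a)⁻¹` and `q = (ENNReal.ofReal b)⁻¹`).  If `T_{ν_γ} f = f ∗ ν_γ` is
bounded from `L^p(ℍⁿ)` to `L^q(ℍⁿ)`, then `1/q ≥ 1/p − (2n−γ)/(2n+2)`. -/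
theorem nuGamma_type_set_necessary_two (n : ℕ) (A : Matrix (Hidx n) (Hidx n) ℝ)
    (hA : A.IsSymm) (η : (Hidx n → ℝ) → ℝ) (hη : ContDiff ℝ (⊤ : ℕ∞) η)
    (hη01 : ∀ y, η y ∈ Set.Icc (0 : ℝ) 1)
    (hη1 : ∀ y, enorm2n y ≤ 1 → η y = 1)
    (hη0 : ∀ y, 2 ≤ enorm2n y → η y = 0)
    (γ : ℝ) (hγ0 : 0 ≤ γ) (hγ : γ < 2 * n)
    (a b : ℝ) (ha0 : 0 ≤ a) (ha1 : a ≤ 1) (hb0 : 0 ≤ b) (hb1 : b ≤ 1)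
    (hbdd : ∃ c : ℝ, 0 < c ∧ ∀ f : Hgrp n → ℝ,
      MemLp f (ENNReal.ofReal a)⁻¹ volume →
        eLpNorm (heisConv f (nuGamma A η γ)) (ENNReal.ofReal b)⁻¹ volume ≤
          ENNReal.ofReal c * eLpNorm f (ENNReal.ofReal a)⁻¹ volume) :
    a - (2 * n - γ) / (2 * n + 2) ≤ b := by
  rcases Nat.eq_zero_or_pos n with hn0 | hn
  · exfalso
    subst hn0
    simp at hγ
    linarith
  obtain ⟨c, hc, hB⟩ := hbdd
  set N : ℕ := 2*n with hNdef
  set KA : ℝ := ∑ i, ∑ j, |A i j| with hKAdef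
  set KJ : ℝ := ∑ i, ∑ j, |Jmat n i j| with hKJdef
  have hKA0 : 0 ≤ KA := Finset.sum_nonneg fun i _ => Finset.sum_nonneg fun j _ => abs_nonneg _
  have hKJ0 : 0 ≤ KJ := Finset.sum_nonneg fun i _ => Finset.sum_nonneg fun j _ => abs_nonneg _
  set Ec : ℝ := KA + KJ + 1 with hEcdef
  have hEc1 : 1 ≤ Ec := by linarith
  set w : (Hidx n → ℝ) → ℝ≥0∞ := fun y => ENNReal.ofReal (η y * enorm2n y ^ (-γ)) with hwdef
  have hwm : Measurable w :=
    Measurable.ennreal_ofReal (hη.continuous.measurable.mul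
      (continuous_enorm2n.measurable.pow measurable_const))
  have hgm : Measurable (fun y : Hidx n → ℝ => (y, qform A y)) :=
    measurable_id.prodMk (continuous_qform A).measurable
  have hIfin : (∫⁻ y, w y) < ∞ := nu_finiteness η hη.continuous hη01 hη0 hγ0 hγ
  set ν := nuGamma A η γ with hν
  set C : ℝ := ((n:ℝ)+1)^N * c * (4^N * (2*Ec)) with hCdef
  have hEc0 : (0:ℝ) < Ec := lt_of_lt_of_le one_pos hEc1
  have hCpos : 0 < C := by
    rw [hCdef]
    refine mul_pos (mul_pos (pow_pos (by positivity) N) hc) (mul_pos (pow_pos (by norm_num) N) (by linarith))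
  have key : ∀ δ : ℝ, δ ∈ Set.Ioc (0:ℝ) 1 →
      δ ^ (((N:ℝ) - γ) + ((N:ℝ)+2)*b) ≤ C * δ ^ (((N:ℝ)+2)*a) := by
    intro δ hδmem
    obtain ⟨hδ0, hδ1⟩ := hδmem
    set δ' : ℝ := δ / (2*(n:ℝ)+2) with hδ'def
    have h2n2 : (0:ℝ) < 2*(n:ℝ)+2 := by positivity
    have hδ'0 : 0 < δ' := div_pos hδ0 h2n2
    have hδ'δ : δ' ≤ δ := by
      rw [hδ'def, div_le_iff₀ h2n2]
      nlinarith [Nat.cast_nonneg (α := ℝ) n]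
    have hδ'eq : (2*(n:ℝ)+2) * δ' = δ := by
      rw [hδ'def]
      field_simp
    set St : Set (Hgrp n) := boxV n (2*δ) ×ˢ Set.Icc (-(Ec*δ^2)) (Ec*δ^2) with hStdef
    set Tt : Set (Hgrp n) := boxV n δ ×ˢ Set.Icc (-(δ^2)) (δ^2) with hTtdef
    have hStm : MeasurableSet St := (boxV_measurable n _).prod measurableSet_Icc
    have hTtm : MeasurableSet Tt := (boxV_measurable n _).prod measurableSet_Icc
    set Vs : ℝ := (2*(2*δ))^(2*n) * (Ec*δ^2 - -(Ec*δ^2)) with hVsdef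
    set Vt : ℝ := (2*δ)^(2*n) * (δ^2 - -(δ^2)) with hVtdef
    have hVs0 : 0 < Vs := by
      rw [hVsdef]
      have h1 : Ec*δ^2 - -(Ec*δ^2) = 2*(Ec*δ^2) := by ring
      rw [h1]
      exact mul_pos (pow_pos (by linarith) _) (by nlinarith)
    have hVt0 : 0 < Vt := by
      rw [hVtdef]
      have h1 : δ^2 - -(δ^2) = 2*δ^2 := by ring
      rw [h1]
      exact mul_pos (pow_pos (by linarith) _) (by nlinarith)
    have hvolS : volume St = ENNReal.ofReal Vs := by
      rw [hStdef, Measure.volume_eq_prod, Measure.prod_prod,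
        volume_boxV n (by linarith : (0:ℝ) ≤ 2*δ),
        Real.volume_Icc, ← ENNReal.ofReal_mul (pow_nonneg (by linarith) _)]
    have hvolT : volume Tt = ENNReal.ofReal Vt := by
      rw [hTtdef, Measure.volume_eq_prod, Measure.prod_prod,
        volume_boxV n hδ0.le,
        Real.volume_Icc, ← ENNReal.ofReal_mul (pow_nonneg (by linarith) _)]
    set f : Hgrp n → ℝ := St.indicator (fun _ => (1:ℝ)) with hfdef
    have hMem : MemLp f (ENNReal.ofReal a)⁻¹ volume :=
      memLp_indicator_const _ hStm 1 (Or.inr (by rw [hvolS]; exact ENNReal.ofReal_ne_top))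
    set mm : ℝ := δ ^ (-γ) * (2*δ')^(2*n) with hmdef
    have hm0 : 0 < mm := by
      rw [hmdef]
      exact mul_pos (Real.rpow_pos_of_pos hδ0 _) (pow_pos (by linarith) _)
    -- lower bound for the convolution on Tt
    have hconv : ∀ p ∈ Tt, mm ≤ heisConv f ν p := by
      rintro ⟨x, t⟩ hp
      rw [hTtdef, Set.mem_prod] at hp
      obtain ⟨hx', ht'⟩ := hp
      have hx := mem_boxV.mp hx'
      have htabs : |t| ≤ δ^2 := abs_le.mpr (Set.mem_Icc.mp ht')
      set mfun : Hgrp n → Hgrp n := fun q => heisMul (x, t) (heisInv q) with hmfdef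
      have hmfc : Continuous mfun := by
        rw [hmfdef]
        unfold heisMul heisInv
        refine Continuous.prodMk (continuous_const.add continuous_fst.neg) ?_
        refine ((continuous_const.add continuous_snd.neg)).add ?_
        exact (continuous_dot_mulVec (Jmat n) x).comp continuous_fst.neg
      have hpre : MeasurableSet (mfun ⁻¹' St) := hStm.preimage hmfc.measurable
      set U : Set (Hidx n → ℝ) := (fun y => mfun (y, qform A y)) ⁻¹' St with hUdef
      have hsubbox : boxV n δ' ⊆ U := by
        intro y hymem
        have hy := mem_boxV.mp hymem
        have hδ'nn := hδ'0.le
        have hmf_eq : mfun (y, qform A y) =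
            (x + -y, t + -(qform A y) + x ⬝ᵥ (Jmat n *ᵥ (-y))) := rfl
        rw [hUdef, Set.mem_preimage, hmf_eq, hStdef, Set.mem_prod]
        constructor
        · rw [mem_boxV]
          intro i
          have h1 := hx i
          have h2 := hy i
          calc |(x + -y) i| = |x i + -(y i)| := by simp
          _ ≤ |x i| + |y i| := by
              refine (abs_add_le _ _).trans ?_
              simp
          _ ≤ δ + δ' := add_le_add h1 h2
          _ ≤ 2*δ := by linarith
        · rw [Set.mem_Icc, ← abs_le]
          have hq : |qform A y| ≤ KA * (δ' * δ') := abs_dot_mulVec_le A hδ'nn hδ'nn hy hy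
          have hyneg : ∀ i, |(-y) i| ≤ δ' := fun i => by
            simpa using hy i
          have hd : |x ⬝ᵥ (Jmat n *ᵥ (-y))| ≤ KJ * (δ * δ') :=
            abs_dot_mulVec_le (Jmat n) hδ0.le hδ'nn hx hyneg
          have hδ'δ2 : δ' * δ' ≤ δ^2 := by nlinarith
          have hδδ' : δ * δ' ≤ δ^2 := by nlinarith
          calc |t + -(qform A y) + x ⬝ᵥ (Jmat n *ᵥ (-y))|
              ≤ |t + -(qform A y)| + |x ⬝ᵥ (Jmat n *ᵥ (-y))| := abs_add_le _ _
          _ ≤ (|t| + |qform A y|) + |x ⬝ᵥ (Jmat n *ᵥ (-y))| := by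
              refine add_le_add_left ((abs_add_le _ _).trans ?_) _
              simp
          _ ≤ Ec * δ^2 := by
              rw [hEcdef]
              nlinarith [hq, hd, htabs, mul_le_mul_of_nonneg_left hδ'δ2 hKA0,
                mul_le_mul_of_nonneg_left hδδ' hKJ0]
      have hUm : MeasurableSet U := hpre.preimage hgm
      have hstep1 : heisConv f ν (x, t) = (ν (mfun ⁻¹' St)).toReal := by
        have hfe : (fun q => f (heisMul (x, t) (heisInv q))) =
            (mfun ⁻¹' St).indicator (fun _ => (1:ℝ)) := by
          funext q
          have hrw : heisMul (x, t) (heisInv q) = mfun q := rfl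
          rw [hrw, hfdef]
          by_cases hq : mfun q ∈ St
          · rw [Set.indicator_of_mem hq, Set.indicator_of_mem (Set.mem_preimage.mpr hq)]
          · have hq' : q ∉ mfun ⁻¹' St := fun hcon => hq hcon
            rw [Set.indicator_of_notMem hq, Set.indicator_of_notMem hq']
        rw [heisConv, hfe]
        exact integral_indicator_one hpre
      have hstep2 : ν (mfun ⁻¹' St) = ∫⁻ y in U, w y := by
        rw [hν, nuGamma, Measure.map_apply hgm hpre, withDensity_apply _ (hpre.preimage hgm)]
        rfl
      have h0vol : volume ({(0 : Hidx n → ℝ)} : Set (Hidx n → ℝ)) = 0 := by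
        have hset : ({(0 : Hidx n → ℝ)} : Set _) = Set.univ.pi (fun _ => ({0} : Set ℝ)) := by
          ext z
          simp [funext_iff, Set.mem_pi]
        rw [hset, volume_pi_pi]
        simp only [Real.volume_singleton]
        rw [Finset.prod_const, Finset.card_univ]
        refine zero_pow ?_
        simp only [Fintype.card_sum, Fintype.card_fin]
        omega
      have hne : ∀ᵐ y : Hidx n → ℝ, y ≠ (0 : Hidx n → ℝ) := by
        rw [ae_iff]
        simp only [not_not, Set.setOf_eq_eq_singleton]
        exact h0vol
      have hae : ∀ᵐ y : Hidx n → ℝ, y ∈ boxV n δ' → ENNReal.ofReal (δ ^ (-γ)) ≤ w y := by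
        refine hne.mono fun y hy hybox => ?_
        have hy' := mem_boxV.mp hybox
        have he_le : enorm2n y ≤ δ := by
          have := enorm2n_le hδ'0.le hy'
          rwa [hδ'eq] at this
        have hη1y : η y = 1 := hη1 y (le_trans he_le hδ1)
        have hepos : 0 < enorm2n y := enorm2n_pos hy
        have hrp : δ ^ (-γ) ≤ enorm2n y ^ (-γ) :=
          Real.rpow_le_rpow_of_nonpos hepos he_le (neg_nonpos.mpr hγ0)
        rw [hwdef]
        exact ENNReal.ofReal_le_ofReal (by rw [hη1y, one_mul]; exact hrp)
      have hstep3 : ENNReal.ofReal mm ≤ ∫⁻ y in U, w y := by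
        refine le_trans ?_ (lintegral_mono_set hsubbox)
        calc ENNReal.ofReal mm = ENNReal.ofReal (δ ^ (-γ)) * volume (boxV n δ') := by
              rw [volume_boxV n hδ'0.le, ← ENNReal.ofReal_mul (Real.rpow_nonneg hδ0.le _), hmdef]
          _ = ∫⁻ _y in boxV n δ', ENNReal.ofReal (δ ^ (-γ)) ∂volume := by
              rw [setLIntegral_const]
          _ ≤ ∫⁻ y in boxV n δ', w y := setLIntegral_mono_ae hwm.aemeasurable hae
      have hfin : (∫⁻ y in U, w y) < ∞ :=
        lt_of_le_of_lt (lintegral_mono' Measure.restrict_le_self (le_refl _)) hIfin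
      rw [hstep1, hstep2]
      calc mm = (ENNReal.ofReal mm).toReal := (ENNReal.toReal_ofReal hm0.le).symm
      _ ≤ (∫⁻ y in U, w y).toReal := ENNReal.toReal_mono hfin.ne hstep3
    -- eLpNorm lower bound
    have hlow : ENNReal.ofReal mm * (ENNReal.ofReal Vt) ^ b ≤
        eLpNorm (heisConv f ν) (ENNReal.ofReal b)⁻¹ volume := by
      have hTvol0 : volume Tt ≠ 0 := by
        rw [hvolT]
        simp only [ne_eq, ENNReal.ofReal_eq_zero, not_le]
        exact hVt0
      have hmono : eLpNorm (Tt.indicator fun _ => mm) (ENNReal.ofReal b)⁻¹ volume ≤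
          eLpNorm (heisConv f ν) (ENNReal.ofReal b)⁻¹ volume := by
        refine eLpNorm_mono fun p => ?_
        by_cases hp : p ∈ Tt
        · rw [Set.indicator_of_mem hp, Real.norm_eq_abs, Real.norm_eq_abs, abs_of_pos hm0]
          exact le_trans (hconv p hp) (le_abs_self _)
        · rw [Set.indicator_of_notMem hp]
          simpa using norm_nonneg _
      refine le_trans ?_ hmono
      rcases eq_or_lt_of_le hb0 with hb' | hb'
      · have hQ : (ENNReal.ofReal b)⁻¹ = ∞ := by
          rw [← hb', ENNReal.ofReal_zero, ENNReal.inv_zero]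
        rw [hQ, eLpNorm_exponent_top, eLpNormEssSup_indicator_const_eq Tt mm hTvol0,
          ← hb', ENNReal.rpow_zero, mul_one, ← ofReal_norm, Real.norm_eq_abs,
          abs_of_pos hm0]
      · have hQ0 : (ENNReal.ofReal b)⁻¹ ≠ 0 := ENNReal.inv_ne_zero.mpr ENNReal.ofReal_ne_top
        have hQtop : (ENNReal.ofReal b)⁻¹ ≠ ∞ :=
          ENNReal.inv_ne_top.mpr (ENNReal.ofReal_pos.mpr hb').ne'
        rw [eLpNorm_indicator_const hTtm hQ0 hQtop]
        have hQt : 1 / ((ENNReal.ofReal b)⁻¹).toReal = b := by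
          rw [ENNReal.toReal_inv, ENNReal.toReal_ofReal hb0, one_div, inv_inv]
        rw [hQt, ← ofReal_norm, Real.norm_eq_abs, abs_of_pos hm0, hvolT]
    -- eLpNorm upper bound
    have hup : eLpNorm f (ENNReal.ofReal a)⁻¹ volume ≤ (ENNReal.ofReal Vs) ^ a := by
      rcases eq_or_lt_of_le ha0 with ha' | ha'
      · have hP : (ENNReal.ofReal a)⁻¹ = ∞ := by
          rw [← ha', ENNReal.ofReal_zero, ENNReal.inv_zero]
        rw [hP, eLpNorm_exponent_top, ← ha', ENNReal.rpow_zero, hfdef]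
        refine le_trans (eLpNormEssSup_indicator_const_le _ _) ?_
        simp
      · have hP0 : (ENNReal.ofReal a)⁻¹ ≠ 0 := ENNReal.inv_ne_zero.mpr ENNReal.ofReal_ne_top
        have hPtop : (ENNReal.ofReal a)⁻¹ ≠ ∞ :=
          ENNReal.inv_ne_top.mpr (ENNReal.ofReal_pos.mpr ha').ne'
        rw [hfdef, eLpNorm_indicator_const hStm hP0 hPtop]
        have hPt : 1 / ((ENNReal.ofReal a)⁻¹).toReal = a := by
          rw [ENNReal.toReal_inv, ENNReal.toReal_ofReal ha0, one_div, inv_inv]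
        rw [hPt, hvolS]
        simp
    have hchain : ENNReal.ofReal mm * (ENNReal.ofReal Vt) ^ b ≤
        ENNReal.ofReal c * (ENNReal.ofReal Vs) ^ a :=
      hlow.trans ((hB f hMem).trans (mul_le_mul_right hup _))
    have hreal : mm * Vt ^ b ≤ c * Vs ^ a := by
      rw [ENNReal.ofReal_rpow_of_pos hVt0, ENNReal.ofReal_rpow_of_pos hVs0,
        ← ENNReal.ofReal_mul hm0.le, ← ENNReal.ofReal_mul hc.le] at hchain
      exact (ENNReal.ofReal_le_ofReal_iff
        (mul_nonneg hc.le (Real.rpow_nonneg hVs0.le a))).mp hchain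
    -- rpow algebra
    have e1 : δ ^ (((N:ℝ) - γ) + ((N:ℝ)+2)*b) = (δ ^ (-γ) * δ^N) * ((δ^(N+2) : ℝ)) ^ b := by
      rw [← Real.rpow_natCast δ N, ← Real.rpow_natCast δ (N+2), ← Real.rpow_mul hδ0.le,
        ← Real.rpow_add hδ0, ← Real.rpow_add hδ0]
      congr 1
      push_cast
      ring
    have h2δ' : 2*δ' = δ/((n:ℝ)+1) := by
      rw [hδ'def]
      field_simp
    have hm_eq : δ ^ (-γ) * δ^N = mm * ((n:ℝ)+1)^N := by
      rw [hmdef, h2δ', div_pow, hNdef]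
      have hn1 : ((n:ℝ)+1)^(2*n) ≠ 0 := by positivity
      field_simp
    have hVt_ge : (δ^(N+2) : ℝ) ≤ Vt := by
      have hVt_eq : Vt = 2^(N+1) * δ^(N+2) := by
        rw [hVtdef, hNdef]
        ring
      rw [hVt_eq]
      refine le_mul_of_one_le_left (pow_nonneg hδ0.le _) ?_
      exact one_le_pow₀ (by norm_num)
    have hVtb : ((δ^(N+2):ℝ)) ^ b ≤ Vt ^ b :=
      Real.rpow_le_rpow (pow_nonneg hδ0.le _) hVt_ge hb0
    have hVs_eq : Vs = (4^N * (2*Ec)) * δ^(N+2) := by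
      rw [hVsdef, hNdef]
      ring
    have h4E1 : (1:ℝ) ≤ 4^N * (2*Ec) := by
      have h4N : (1:ℝ) ≤ 4^N := one_le_pow₀ (by norm_num)
      nlinarith
    have hδa : ((δ^(N+2):ℝ)) ^ a = δ ^ (((N:ℝ)+2)*a) := by
      rw [← Real.rpow_natCast δ (N+2), ← Real.rpow_mul hδ0.le]
      congr 1
      push_cast
      ring
    have hVsa : Vs ^ a ≤ (4^N * (2*Ec)) * ((δ^(N+2):ℝ)) ^ a := by
      rw [hVs_eq, Real.mul_rpow (le_trans zero_le_one h4E1) (pow_nonneg hδ0.le _)]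
      refine mul_le_mul_of_nonneg_right ?_ (Real.rpow_nonneg (pow_nonneg hδ0.le _) a)
      calc (4^N * (2*Ec) : ℝ) ^ a ≤ (4^N * (2*Ec) : ℝ) ^ (1:ℝ) :=
            Real.rpow_le_rpow_of_exponent_le h4E1 ha1
      _ = 4^N * (2*Ec) := Real.rpow_one _
    calc δ ^ (((N:ℝ) - γ) + ((N:ℝ)+2)*b) = (mm * ((n:ℝ)+1)^N) * ((δ^(N+2):ℝ)) ^ b := by
          rw [e1, hm_eq]
    _ ≤ (mm * ((n:ℝ)+1)^N) * Vt^b := by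
        refine mul_le_mul_of_nonneg_left hVtb (mul_nonneg hm0.le (by positivity))
    _ = ((n:ℝ)+1)^N * (mm * Vt^b) := by ring
    _ ≤ ((n:ℝ)+1)^N * (c * Vs^a) := mul_le_mul_of_nonneg_left hreal (by positivity)
    _ ≤ ((n:ℝ)+1)^N * (c * ((4^N * (2*Ec)) * ((δ^(N+2):ℝ)) ^ a)) := by
        refine mul_le_mul_of_nonneg_left (mul_le_mul_of_nonneg_left hVsa hc.le) (by positivity)
    _ = C * δ ^ (((N:ℝ)+2)*a) := by
        rw [hCdef, ← hδa]
        ring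
  have hrs := pow_absorb hCpos key
  have h2n2 : (0:ℝ) < 2*(n:ℝ)+2 := by positivity
  have hNr2 : (N:ℝ) = 2*(n:ℝ) := by
    rw [hNdef]
    push_cast
    ring
  rw [hNr2] at hrs
  have hfin : a - b ≤ (2*(n:ℝ) - γ)/(2*(n:ℝ)+2) := by
    rw [le_div_iff₀ h2n2]
    nlinarith [hrs]
  linarith

end
end
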